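/- arXiv:1011.5814 — 8 statements merged into one kernel-verified Lean document; each statement's English description precedes it below -/
import Mathlib

section
/- Let p be a prime, t a positive integer, and n a positive integer dividing p^t + 1. For every polynomial g over F_p, we have g(X^{-1}) = g(X)^{p^t} in the ring F_p[X]/(X^n - 1). -/
open Polynomial

theorem stmt_1 (p t n : ℕ) (hp : p.Prime) (ht : 0 < t) (hn : 0 < n)
    (hdvd : n ∣ p ^ t + 1) (g : Polynomial (ZMod p)) :
    Ideal.Quotient.mk (Ideal.span {(X : Polynomial (ZMod p)) ^ n - 1}) (g.comp (X ^ (n - 1))) =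
      (Ideal.Quotient.mk (Ideal.span {(X : Polynomial (ZMod p)) ^ n - 1}) g) ^ (p ^ t) := by
  haveI : Fact p.Prime := ⟨hp⟩
  set I : Ideal (Polynomial (ZMod p)) := Ideal.span {(X : Polynomial (ZMod p)) ^ n - 1} with hI
  haveI : Nontrivial (Polynomial (ZMod p) ⧸ I) := by
    refine Ideal.Quotient.nontrivial_iff.mpr ?_
    intro htop
    have hu : IsUnit ((X : Polynomial (ZMod p)) ^ n - 1) := by
      rw [← Ideal.span_singleton_eq_top, ← hI, htop]
    have := Polynomial.natDegree_eq_zero_of_isUnit hu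
    rw [show ((1 : Polynomial (ZMod p)) = C 1) by simp, Polynomial.natDegree_X_pow_sub_C] at this
    omega
  haveI : CharP (Polynomial (ZMod p) ⧸ I) p :=
    charP_of_injective_algebraMap
      (algebraMap (ZMod p) (Polynomial (ZMod p) ⧸ I)).injective p
  set F := Ideal.Quotient.mkₐ (ZMod p) I with hF
  set x : Polynomial (ZMod p) ⧸ I := F X with hx
  have hXn : x ^ n = 1 := by
    have hmem : ((X : Polynomial (ZMod p)) ^ n - 1) ∈ I := Ideal.subset_span rfl
    have h0 : F ((X : Polynomial (ZMod p)) ^ n - 1) = 0 := by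
      simpa [hF] using (Ideal.Quotient.eq_zero_iff_mem.2 hmem)
    have := h0
    rw [map_sub, map_pow, map_one, sub_eq_zero] at this
    simpa [hx] using this
  have key : x ^ (p ^ t) = x ^ (n - 1) := by
    obtain ⟨k, hk⟩ := hdvd
    obtain ⟨k', rfl⟩ : ∃ k', k = k' + 1 := by
      rcases Nat.exists_eq_add_of_lt (show 0 < k by
        rcases Nat.eq_zero_or_pos k with h | h
        · simp [h] at hk
        · exact h) with ⟨k', hk'⟩
      exact ⟨k', by omega⟩
    have hmul : n * (k' + 1) = n * k' + n := by ring
    have hpt : p ^ t = n * k' + (n - 1) := by omega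
    rw [hpt, pow_add, pow_mul, hXn, one_pow, one_mul]
  have frob : ∀ h : Polynomial (ZMod p), aeval (x ^ p ^ t) h = (aeval x h) ^ p ^ t := by
    intro h
    induction h using Polynomial.induction_on' with
    | add f g hf hg => rw [map_add, map_add, add_pow_char_pow, hf, hg]
    | monomial m a =>
        rw [aeval_monomial, aeval_monomial, mul_pow, ← pow_mul, ← pow_mul, mul_comm m]
        congr 1
        rw [← map_pow, ZMod.pow_card_pow]
  calc F (g.comp (X ^ (n - 1)))
      = aeval (x ^ (n - 1)) g := by
        rw [Polynomial.comp_eq_aeval, ← Polynomial.aeval_algHom_apply, map_pow]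
    _ = (aeval x g) ^ p ^ t := by rw [← key, frob]
    _ = (F g) ^ p ^ t := by
        congr 1
        rw [hx, Polynomial.aeval_algHom_apply, Polynomial.aeval_X_left_apply]
end

section
/- Let p be a prime and n a positive integer dividing p^t + 1 for some positive integer t, with n coprime to p. Then every irreducible factor of X^n - 1 over F_p other than X - 1 and X + 1 has even degree. -/
/-!
Let `α` be a root of `f` in `AdjoinRoot f`, a field with `p ^ m` elements where `m = deg f`,
and let `d` be the multiplicative order of `α`. Then `d ∣ n ∣ p ^ t + 1` and `α ^ (p ^ m) = α`,
so in `ZMod d` we have `p ^ t = -1` and `p ^ m = 1`. Since `α ≠ ±1`, `d > 2` and so `-1 ≠ 1`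
in `ZMod d`. If `m` were odd, `1 = (p ^ m) ^ t = (p ^ t) ^ m = (-1) ^ m = -1`.
-/

open Polynomial

theorem even_of_pow_eq_one_of_pow_eq_neg_one {M : Type*} [Monoid M] [HasDistribNeg M] {x : M}
    {m t : ℕ} (hne : (-1 : M) ≠ 1) (hm : x ^ m = 1) (ht : x ^ t = -1) : Even m := by
  by_contra hodd
  apply hne
  calc (-1 : M) = (x ^ t) ^ m := by rw [ht, (Nat.not_even_iff_odd.mp hodd).neg_one_pow]
    _ = (x ^ m) ^ t := by rw [← pow_mul, ← pow_mul, mul_comm]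
    _ = 1 := by rw [hm, one_pow]

theorem two_lt_orderOf {R : Type*} [Ring R] [NoZeroDivisors R] {x : R} (hpos : 0 < orderOf x)
    (h1 : x ≠ 1) (h2 : x ≠ -1) : 2 < orderOf x := by
  have hne1 : orderOf x ≠ 1 := fun h => h1 (orderOf_eq_one_iff.mp h)
  have hne2 : orderOf x ≠ 2 := fun h =>
    sq_ne_one_iff.mpr ⟨h1, h2⟩ (h ▸ pow_orderOf_eq_one x)
  omega

theorem FiniteField.natCast_natCard_eq_one_zmod_orderOf {K : Type*} [GroupWithZero K] [Finite K]
    {x : K} (hx : IsOfFinOrder x) : (Nat.card K : ZMod (orderOf x)) = 1 := by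
  have := Fintype.ofFinite K
  rw [Nat.card_eq_fintype_card, ← Nat.cast_one, ZMod.natCast_eq_natCast_iff,
    ← hx.pow_eq_pow_iff_modEq, pow_one, FiniteField.pow_card]

namespace AdjoinRoot

variable {K : Type*} [Field K] {f : K[X]}

theorem natCard_eq_pow_natDegree [Finite K] (hf : f ≠ 0) :
    Nat.card (AdjoinRoot f) = Nat.card K ^ f.natDegree := by
  have := (powerBasis hf).finite
  rw [Module.natCard_eq_pow_finrank (K := K), (powerBasis hf).finrank, powerBasis_dim]

theorem associated_X_sub_C_of_root_eq (hf : Irreducible f) {a : K} (h : root f = of f a) :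
    Associated f (X - C a) :=
  hf.associated_of_dvd (irreducible_X_sub_C a) (mk_eq_zero.mp (by simp [h]))

end AdjoinRoot

theorem stmt_2_general (p t n : ℕ) (hp : p.Prime)
    (hdvd : n ∣ p ^ t + 1) (f : Polynomial (ZMod p)) (hf : Irreducible f)
    (hfdvd : f ∣ X ^ n - 1)
    (h1 : ¬ Associated f (X - 1)) (h2 : ¬ Associated f (X + 1)) :
    Even f.natDegree := by
  have : Fact p.Prime := ⟨hp⟩
  have : Fact (Irreducible f) := ⟨hf⟩
  set α := AdjoinRoot.root f
  have hcard : Nat.card (AdjoinRoot f) = p ^ f.natDegree := by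
    rw [AdjoinRoot.natCard_eq_pow_natDegree hf.ne_zero, Nat.card_zmod]
  have : Finite (AdjoinRoot f) := Nat.finite_of_card_ne_zero (hcard ▸ pow_ne_zero _ hp.ne_zero)
  have hαn : α ^ n = 1 := by simpa [sub_eq_zero] using AdjoinRoot.mk_eq_zero.mpr hfdvd
  have hd : orderOf α ∣ p ^ t + 1 := (orderOf_dvd_of_pow_eq_one hαn).trans hdvd
  have hα1 : α ≠ 1 := fun h =>
    h1 (by simpa using AdjoinRoot.associated_X_sub_C_of_root_eq hf (a := 1) (by simpa using h))
  have hα2 : α ≠ -1 := fun h =>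
    h2 (by simpa using AdjoinRoot.associated_X_sub_C_of_root_eq hf (a := -1) (by simpa using h))
  have hpos : 0 < orderOf α := Nat.pos_of_dvd_of_pos hd (by positivity)
  have : Fact (2 < orderOf α) := ⟨two_lt_orderOf hpos hα1 hα2⟩
  have hpt : (p : ZMod (orderOf α)) ^ t = -1 :=
    eq_neg_of_add_eq_zero_left (by exact_mod_cast (ZMod.natCast_eq_zero_iff _ _).mpr hd)
  have hpm : (p : ZMod (orderOf α)) ^ f.natDegree = 1 := by
    simpa [hcard] using FiniteField.natCast_natCard_eq_one_zmod_orderOf (orderOf_pos_iff.mp hpos)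
  exact even_of_pow_eq_one_of_pow_eq_neg_one ZMod.neg_one_ne_one hpm hpt

theorem stmt_2 (p t n : ℕ) (hp : p.Prime) (ht : 0 < t) (hn : 0 < n)
    (hdvd : n ∣ p ^ t + 1) (f : Polynomial (ZMod p)) (hf : Irreducible f)
    (hfdvd : f ∣ X ^ n - 1)
    (h1 : ¬ Associated f (X - 1)) (h2 : ¬ Associated f (X + 1)) :
    Even f.natDegree :=
  stmt_2_general p t n hp hdvd f hf hfdvd h1 h2
end

section
/- Let p be a prime, n coprime to p, and let S be a subspace of F_p^n × F_p^n closed under simultaneous cyclic shift (i.e., (a,b) ∈ S implies (Na, Nb) ∈ S). Then S is totally isotropic for the symplectic form ⟨(a,b),(c,d)⟩ = a^T d - b^T c if and only if for all (a,b), (c,d) in S, the polynomial identity b(X)c(X^{-1}) - a(X)d(X^{-1}) = 0 holds modulo X^n - 1. -/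
open Polynomial

/-- The polynomial associated to a vector in `F_p^n`. -/
noncomputable def vecToPoly {p n : ℕ} (a : Fin n → ZMod p) : Polynomial (ZMod p) :=
  ∑ i : Fin n, Polynomial.C (a i) * Polynomial.X ^ (i : ℕ)

/-- The cyclic right-shift operator on `F_p^n`. -/
def rightShift {p n : ℕ} [NeZero n] (u : Fin n → ZMod p) : Fin n → ZMod p :=
  fun i => u (i - 1)

/-- The symplectic form `⟨(a,b),(c,d)⟩ = aᵀd - bᵀc` on `F_p^n × F_p^n`. -/
def sympForm {p n : ℕ} (u v : (Fin n → ZMod p) × (Fin n → ZMod p)) : ZMod p :=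
  (∑ i : Fin n, u.1 i * v.2 i) - (∑ i : Fin n, u.2 i * v.1 i)

/-!
Modulo `X ^ n - 1`, where `X⁻¹ = X ^ (n - 1)`, the polynomial `b(X) c(X⁻¹) - a(X) d(X⁻¹)`
reduces to the polynomial of degree `< n` whose `k`-th coefficient is `-⟨(a, b), Nᵏ (c, d)⟩`.
As `X ^ n - 1` has degree `n`, divisibility means that all these coefficients vanish. For `S`
closed under `N` this follows from isotropy, and conversely the coefficient `k = 0` is
`-⟨(a, b), (c, d)⟩`.
-/

open Fin.NatCast

theorem pow_sub_one_dvd_pow_sub_pow_of_modEq {R : Type*} [CommRing R] (x : R) {n a b : ℕ}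
    (h : a ≡ b [MOD n]) : x ^ n - 1 ∣ x ^ a - x ^ b := by
  have reduce (c : ℕ) : x ^ n - 1 ∣ x ^ c - x ^ (c % n) := by
    have hc : x ^ c - x ^ (c % n) = x ^ (c % n) * (x ^ (n * (c / n)) - 1) := by
      rw [mul_sub, ← pow_add, Nat.mod_add_div, mul_one]
    exact hc ▸ (pow_one_sub_dvd_pow_mul_sub_one x n (c / n)).mul_left _
  have hab := (reduce a).sub (reduce b)
  rwa [show a % n = b % n from h, sub_sub_sub_cancel_right] at hab

theorem X_pow_sub_one_dvd_sum_iff {K : Type*} [Field K] {n : ℕ} (hn : n ≠ 0) (f : Fin n → K) :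
    ((X : K[X]) ^ n - 1) ∣ ∑ i : Fin n, C (f i) * X ^ (i : ℕ) ↔ f = 0 := by
  refine ⟨fun h => ?_, fun h => by simp [h]⟩
  have hdeg : ((X : K[X]) ^ n - 1).degree = n := by
    simpa using degree_X_pow_sub_C (Nat.pos_of_ne_zero hn) (1 : K)
  have hzero := eq_zero_of_dvd_of_degree_lt h (hdeg ▸ degree_sum_fin_lt f)
  funext k
  simpa [finsetSum_coeff, coeff_C_mul_X_pow, Fin.val_inj] using congrArg (coeff · k) hzero

variable {p n : ℕ}

theorem vecToPoly_sub (f g : Fin n → ZMod p) :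
    vecToPoly (f - g) = vecToPoly f - vecToPoly g := by
  simp [vecToPoly, sub_mul, Finset.sum_sub_distrib]

theorem rightShift_iterate [NeZero n] (u : Fin n → ZMod p) (k : ℕ) :
    rightShift^[k] u = fun i => u (i - (k : Fin n)) := by
  induction k with
  | zero => simp
  | succ k ih =>
    funext i
    simp only [Function.iterate_succ_apply', rightShift, ih, Nat.cast_succ, sub_sub, add_comm]

def cyclicCorrelation [NeZero n] (a d : Fin n → ZMod p) : Fin n → ZMod p :=
  fun k => ∑ i, a i * d (i - k)

theorem Fin.val_add_val_mul_pred_modEq_val_sub [NeZero n] (i j : Fin n) :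
    (i : ℕ) + j * (n - 1) ≡ ((i - j : Fin n) : ℕ) [MOD n] := by
  rw [← ZMod.natCast_eq_natCast_iff, Fin.sub_def, ZMod.natCast_mod]
  push_cast [Nat.cast_sub j.isLt.le, Nat.cast_sub (NeZero.one_le : 1 ≤ n)]
  simp only [ZMod.natCast_self]
  ring

theorem X_pow_sub_one_dvd_vecToPoly_mul_comp_sub [NeZero n] (a d : Fin n → ZMod p) :
    ((X : (ZMod p)[X]) ^ n - 1) ∣
      vecToPoly a * (vecToPoly d).comp (X ^ (n - 1)) - vecToPoly (cyclicCorrelation a d) := by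
  have hprod : vecToPoly a * (vecToPoly d).comp (X ^ (n - 1)) =
      ∑ i : Fin n, ∑ j : Fin n, C (a i * d j) * X ^ ((i : ℕ) + j * (n - 1)) := by
    simp only [vecToPoly, sum_comp, mul_comp, C_comp, pow_comp, X_comp, Finset.sum_mul_sum]
    refine Finset.sum_congr rfl fun i _ => Finset.sum_congr rfl fun j _ => ?_
    rw [map_mul]
    ring
  have hcorr : vecToPoly (cyclicCorrelation a d) =
      ∑ i : Fin n, ∑ j : Fin n, C (a i * d j) * X ^ ((i - j : Fin n) : ℕ) := by
    simp only [vecToPoly, cyclicCorrelation, map_sum, Finset.sum_mul]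
    rw [Finset.sum_comm]
    refine Finset.sum_congr rfl fun i _ => Fintype.sum_equiv (Equiv.subLeft i) _ _ fun k => ?_
    simp [Equiv.subLeft, sub_sub_cancel]
  rw [hprod, hcorr, ← Finset.sum_sub_distrib]
  refine Finset.dvd_sum fun i _ => ?_
  rw [← Finset.sum_sub_distrib]
  refine Finset.dvd_sum fun j _ => ?_
  rw [← mul_sub]
  exact (pow_sub_one_dvd_pow_sub_pow_of_modEq X
    (Fin.val_add_val_mul_pred_modEq_val_sub i j)).mul_left _

theorem sympForm_map_rightShift_iterate [NeZero n] (u v : (Fin n → ZMod p) × (Fin n → ZMod p))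
    (k : Fin n) :
    sympForm u ((Prod.map rightShift rightShift)^[k] v) =
      (cyclicCorrelation u.1 v.2 - cyclicCorrelation u.2 v.1) k := by
  simp [sympForm, rightShift_iterate, cyclicCorrelation]

theorem X_pow_sub_one_dvd_iff_sympForm_map_rightShift_iterate [Fact p.Prime] [NeZero n]
    (u v : (Fin n → ZMod p) × (Fin n → ZMod p)) :
    ((X : (ZMod p)[X]) ^ n - 1) ∣
        vecToPoly u.2 * (vecToPoly v.1).comp (X ^ (n - 1)) -
          vecToPoly u.1 * (vecToPoly v.2).comp (X ^ (n - 1)) ↔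
      ∀ k : Fin n, sympForm u ((Prod.map rightShift rightShift)^[k] v) = 0 := by
  have hcong : ((X : (ZMod p)[X]) ^ n - 1) ∣
      vecToPoly u.2 * (vecToPoly v.1).comp (X ^ (n - 1)) -
        vecToPoly u.1 * (vecToPoly v.2).comp (X ^ (n - 1)) -
          vecToPoly (cyclicCorrelation u.2 v.1 - cyclicCorrelation u.1 v.2) := by
    convert (X_pow_sub_one_dvd_vecToPoly_mul_comp_sub u.2 v.1).sub
      (X_pow_sub_one_dvd_vecToPoly_mul_comp_sub u.1 v.2) using 1
    rw [vecToPoly_sub]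
    ring
  rw [dvd_iff_dvd_of_dvd_sub hcong, vecToPoly, X_pow_sub_one_dvd_sum_iff (NeZero.ne n),
    funext_iff]
  simp only [sympForm_map_rightShift_iterate, Pi.sub_apply, Pi.zero_apply, sub_eq_zero, eq_comm]

theorem stmt_6_general (p n : ℕ) (hp : p.Prime) [NeZero n]
    (S : Submodule (ZMod p) ((Fin n → ZMod p) × (Fin n → ZMod p)))
    (hcyc : ∀ w ∈ S, (rightShift w.1, rightShift w.2) ∈ S) :
    (∀ u ∈ S, ∀ v ∈ S, sympForm u v = 0) ↔
      (∀ u ∈ S, ∀ v ∈ S,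
        ((X : Polynomial (ZMod p)) ^ n - 1) ∣
          (vecToPoly u.2 * (vecToPoly v.1).comp (X ^ (n - 1)) -
            vecToPoly u.1 * (vecToPoly v.2).comp (X ^ (n - 1)))) := by
  have := Fact.mk hp
  have hshift : Set.MapsTo (Prod.map rightShift rightShift)
      (S : Set ((Fin n → ZMod p) × (Fin n → ZMod p))) S := fun w hw => hcyc w hw
  refine ⟨fun hiso u hu v hv => ?_, fun hdvd u hu v hv => ?_⟩
  · exact (X_pow_sub_one_dvd_iff_sympForm_map_rightShift_iterate u v).2
      fun k => hiso u hu _ (hshift.iterate k hv)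
  · simpa using (X_pow_sub_one_dvd_iff_sympForm_map_rightShift_iterate u v).1 (hdvd u hu v hv) 0

theorem stmt_6 (p n : ℕ) (hp : p.Prime) [NeZero n] (hcop : Nat.Coprime n p)
    (S : Submodule (ZMod p) ((Fin n → ZMod p) × (Fin n → ZMod p)))
    (hcyc : ∀ w ∈ S, (rightShift w.1, rightShift w.2) ∈ S) :
    (∀ u ∈ S, ∀ v ∈ S, sympForm u v = 0) ↔
      (∀ u ∈ S, ∀ v ∈ S,
        ((X : Polynomial (ZMod p)) ^ n - 1) ∣
          (vecToPoly u.2 * (vecToPoly v.1).comp (X ^ (n - 1)) -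
            vecToPoly u.1 * (vecToPoly v.2).comp (X ^ (n - 1)))) :=
  stmt_6_general p n hp S hcyc
end

section
/- Let p be a prime, n coprime to p, and let S be the uniquely cyclic subspace of F_p^n × F_p^n generated by the pair (g, f), i.e., S = {(a·g, a·f) : a ∈ F_p[X]/(X^n-1)} (under the polynomial identification). Then S is totally isotropic for the symplectic form if and only if g(X)f(X^{-1}) = g(X^{-1})f(X) modulo X^n - 1. -/
open Polynomial

/-- The coefficient vector of a polynomial, truncated to length `n`. -/
def polyToVec {p : ℕ} (n : ℕ) (q : Polynomial (ZMod p)) : Fin n → ZMod p :=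
  fun i => q.coeff (i : ℕ)

section Aux
variable {R : Type*} [CommRing R]

lemma mod_congr {m P Q : R[X]} (hm : m.Monic) (h : m ∣ P - Q) : P %ₘ m = Q %ₘ m := by
  have h2 := (Polynomial.modByMonic_eq_zero_iff_dvd hm).2 h
  rw [Polynomial.sub_modByMonic, sub_eq_zero] at h2
  exact h2

lemma Xpow_mod {p : ℕ} (hp : 1 < p) {n : ℕ} (hn : 0 < n) (i : ℕ) :
    (X : (ZMod p)[X]) ^ i %ₘ (X ^ n - 1) = X ^ (i % n) := by
  haveI : Fact (1 < p) := ⟨hp⟩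
  have hm : ((X : (ZMod p)[X]) ^ n - 1).Monic := by
    simpa using monic_X_pow_sub_C (1 : ZMod p) hn.ne'
  have hdvd : ((X : (ZMod p)[X]) ^ n - 1) ∣ X ^ i - X ^ (i % n) := by
    have hx : (X : (ZMod p)[X]) ^ i = X ^ (i % n) * ((X : (ZMod p)[X]) ^ n) ^ (i / n) := by
      rw [← pow_mul, ← pow_add, Nat.mod_add_div]
    rw [hx]
    have : (X : (ZMod p)[X]) ^ n - 1 ∣ ((X : (ZMod p)[X]) ^ n) ^ (i / n) - 1 := by
      simpa using sub_dvd_pow_sub_pow ((X : (ZMod p)[X]) ^ n) 1 (i / n)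
    calc ((X : (ZMod p)[X]) ^ n - 1) ∣ X ^ (i % n) * (((X : (ZMod p)[X]) ^ n) ^ (i / n) - 1) :=
          Dvd.dvd.mul_left this _
      _ = X ^ (i % n) * ((X : (ZMod p)[X]) ^ n) ^ (i / n) - X ^ (i % n) := by ring
  rw [mod_congr hm hdvd]
  rw [(Polynomial.modByMonic_eq_self_iff hm).2]
  have hdeg : ((X : (ZMod p)[X]) ^ n - 1).degree = n := by
    simpa using degree_X_pow_sub_C hn (1 : ZMod p)
  rw [hdeg, degree_X_pow]
  exact_mod_cast Nat.mod_lt i hn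

lemma key_mono (p : ℕ) (hp : 1 < p) {n : ℕ} (hn : 0 < n) (i j : ℕ) (c d : ZMod p) :
    (∑ k : Fin n, ((monomial i c : (ZMod p)[X]) %ₘ (X ^ n - 1)).coeff k *
        ((monomial j d : (ZMod p)[X]) %ₘ (X ^ n - 1)).coeff k) =
    (((monomial i c : (ZMod p)[X]) * (monomial j d : (ZMod p)[X]).comp (X ^ (n - 1)))
        %ₘ (X ^ n - 1)).coeff 0 := by
  haveI : Fact (1 < p) := ⟨hp⟩
  have hmod : ∀ (a : ℕ) (e : ZMod p),
      (monomial a e : (ZMod p)[X]) %ₘ (X ^ n - 1) = e • X ^ (a % n) := by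
    intro a e
    rw [← C_mul_X_pow_eq_monomial, ← smul_eq_C_mul, smul_modByMonic, Xpow_mod hp hn]
  rw [hmod, hmod]
  have hcomp : ((monomial j d : (ZMod p)[X]).comp (X ^ (n - 1))) = d • X ^ ((n-1)*j) := by
    rw [← C_mul_X_pow_eq_monomial, mul_comp, C_comp, X_pow_comp, ← pow_mul, ← smul_eq_C_mul]
  rw [hcomp, ← C_mul_X_pow_eq_monomial, ← smul_eq_C_mul]
  have : ((c • (X:(ZMod p)[X]) ^ i) * (d • X ^ ((n-1)*j))) = (c*d) • X ^ (i + (n-1)*j) := by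
    rw [pow_add]; rw [smul_mul_smul_comm]
  rw [this, smul_modByMonic, Xpow_mod hp hn, coeff_smul, coeff_X_pow]
  have harith : (i + (n-1)*j) % n = 0 ↔ i % n = j % n := by
    rw [← Nat.dvd_iff_mod_eq_zero, ← ZMod.natCast_eq_zero_iff,
        ← ZMod.natCast_eq_natCast_iff']
    push_cast [Nat.cast_sub hn]
    constructor <;> intro h
    · linear_combination h - (j:ZMod n) * ZMod.natCast_self n
    · linear_combination h + (j:ZMod n) * ZMod.natCast_self n
  simp only [coeff_smul, coeff_X_pow, smul_eq_mul]
  rcases eq_or_ne (i % n) (j % n) with he | he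
  · rw [if_pos ((harith.mpr he).symm), mul_one]
    rw [Finset.sum_eq_single (⟨i % n, Nat.mod_lt i hn⟩ : Fin n)]
    · simp [he]
    · intro b _ hb
      have hb' : (b : ℕ) ≠ i % n := fun hc => hb (Fin.ext hc)
      simp [hb']
    · simp
  · rw [if_neg (fun hc => he (harith.mp hc.symm)), mul_zero]
    refine Finset.sum_eq_zero fun x _ => ?_
    rcases eq_or_ne (x : ℕ) (i % n) with hx | hx
    · have hx2 : (x : ℕ) ≠ j % n := by rw [hx]; exact he
      simp [hx2]
    · simp [hx]

lemma key (p : ℕ) (hp : 1 < p) {n : ℕ} (hn : 0 < n) (P Q : (ZMod p)[X]) :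
    (∑ k : Fin n, (P %ₘ (X ^ n - 1)).coeff k * (Q %ₘ (X ^ n - 1)).coeff k) =
    ((P * Q.comp (X ^ (n - 1))) %ₘ (X ^ n - 1)).coeff 0 := by
  induction Q using Polynomial.induction_on' with
  | add q r hq hr =>
    simp only [add_modByMonic, coeff_add, mul_add, add_comp, Finset.sum_add_distrib,
      ← hq, ← hr]
  | monomial j d =>
    induction P using Polynomial.induction_on' with
    | add s t hs ht =>
      simp only [add_modByMonic, coeff_add, add_mul, Finset.sum_add_distrib, ← hs, ← ht]
    | monomial i c => exact key_mono p hp hn i j c d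
end Aux

theorem stmt_7 (p n : ℕ) (hp : p.Prime) (hn : 0 < n) (hcop : Nat.Coprime n p)
    (g f : Polynomial (ZMod p))
    (S : Set ((Fin n → ZMod p) × (Fin n → ZMod p)))
    (hS : S = {w | ∃ a : Polynomial (ZMod p),
      w = (polyToVec n ((a * g) %ₘ (X ^ n - 1)), polyToVec n ((a * f) %ₘ (X ^ n - 1)))}) :
    (∀ u ∈ S, ∀ v ∈ S, sympForm u v = 0) ↔
      ((X : Polynomial (ZMod p)) ^ n - 1) ∣
        (g * f.comp (X ^ (n - 1)) - g.comp (X ^ (n - 1)) * f) := by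
  have hp1 : 1 < p := hp.one_lt
  haveI : Fact (1 < p) := ⟨hp1⟩
  have hmonic : ((X : (ZMod p)[X]) ^ n - 1).Monic := by
    simpa using monic_X_pow_sub_C (1 : ZMod p) hn.ne'
  have hsymp : ∀ a b : (ZMod p)[X],
      sympForm (polyToVec n ((a * g) %ₘ (X ^ n - 1)), polyToVec n ((a * f) %ₘ (X ^ n - 1)))
               (polyToVec n ((b * g) %ₘ (X ^ n - 1)), polyToVec n ((b * f) %ₘ (X ^ n - 1)))
      = ((a * b.comp (X ^ (n - 1)) *
          (g * f.comp (X ^ (n - 1)) - g.comp (X ^ (n - 1)) * f)) %ₘ (X ^ n - 1)).coeff 0 := by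
    intro a b
    unfold sympForm polyToVec
    simp only
    rw [key p hp1 hn (a * g) (b * f), key p hp1 hn (a * f) (b * g),
      ← coeff_sub, ← sub_modByMonic]
    have heq : (a * g) * (b * f).comp (X ^ (n - 1)) - (a * f) * (b * g).comp (X ^ (n - 1))
        = a * b.comp (X ^ (n - 1)) * (g * f.comp (X ^ (n - 1)) - g.comp (X ^ (n - 1)) * f) := by
      simp only [mul_comp]; ring
    rw [heq]
  constructor
  · intro hiso
    have H0 : ∀ a : (ZMod p)[X],
        ((a * (g * f.comp (X ^ (n - 1)) - g.comp (X ^ (n - 1)) * f)) %ₘ (X ^ n - 1)).coeff 0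
          = 0 := by
      intro a
      have h1 := hiso _ (by rw [hS]; exact ⟨a, rfl⟩) _ (by rw [hS]; exact ⟨1, rfl⟩)
      rw [hsymp a 1] at h1
      simpa [one_comp] using h1
    rw [← Polynomial.modByMonic_eq_zero_iff_dvd hmonic]
    ext j
    rcases lt_or_ge j n with hj | hj
    · have hk := key p hp1 hn (g * f.comp (X ^ (n - 1)) - g.comp (X ^ (n - 1)) * f) (X ^ j)
      rw [Xpow_mod hp1 hn j, Nat.mod_eq_of_lt hj] at hk
      rw [Finset.sum_eq_single (⟨j, hj⟩ : Fin n)] at hk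
      · rw [coeff_X_pow, if_pos rfl, mul_one] at hk
        rw [hk, X_pow_comp, ← pow_mul]
        rw [show (g * f.comp (X ^ (n - 1)) - g.comp (X ^ (n - 1)) * f) * X ^ ((n - 1) * j)
            = X ^ ((n - 1) * j) * (g * f.comp (X ^ (n - 1)) - g.comp (X ^ (n - 1)) * f)
            from mul_comm _ _]
        rw [H0 (X ^ ((n - 1) * j))]
        simp
      · intro b _ hb
        have hb' : (b : ℕ) ≠ j := fun hc => hb (Fin.ext hc)
        rw [coeff_X_pow, if_neg hb', mul_zero]
      · simp
    · rw [coeff_zero]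
      apply coeff_eq_zero_of_degree_lt
      have hdeg : ((X : (ZMod p)[X]) ^ n - 1).degree = n := by
        simpa using degree_X_pow_sub_C hn (1 : ZMod p)
      calc _ < ((X : (ZMod p)[X]) ^ n - 1).degree := degree_modByMonic_lt _ hmonic
        _ ≤ j := by rw [hdeg]; exact_mod_cast hj
  · intro hdvd
    rw [hS]
    rintro u ⟨a, rfl⟩ v ⟨b, rfl⟩
    rw [hsymp a b,
      (Polynomial.modByMonic_eq_zero_iff_dvd hmonic).2 (Dvd.dvd.mul_left hdvd _), coeff_zero]
end

section
/- Let p be a prime, n coprime to p, S the uniquely cyclic subspace {(ag, af) : a ∈ R} of F_p^n × F_p^n with R = F_p[X]/(X^n-1). A pair (u, v) of F_p^n × F_p^n lies in the symplectic centraliser of S (i.e., has symplectic product zero with every element of S) if and only if g(X)v(X^{-1}) = u(X^{-1})f(X) modulo X^n - 1. -/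
open Polynomial

/-!
Identify a vector `w` with `w(X) = ∑ wᵢ Xⁱ` and put `w* = w(X^(n-1))`, which is `w(X⁻¹)` modulo
`Xⁿ - 1`. Writing `τ q` for the constant coefficient of `q` reduced modulo `Xⁿ - 1`, coordinate
sums become products, `∑ wᵢ qᵢ = τ (w* q)`, since `X^(i(n-1)) Xᵏ ≡ X^(k-i)`. Hence
`⟨(u, v), (a g, a f)⟩ = τ (a (u* f - v* g))`. The trace form `(a, b) ↦ τ (a b)` on
`R[X]/(Xⁿ - 1)` is nondegenerate, as testing against `a = X^(j(n-1))` reads off the `j`-th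
coefficient, so this vanishes for every `a` exactly when `Xⁿ - 1 ∣ u* f - v* g`.
-/

theorem Nat.dvd_mul_sub_one_add_iff {n i k : ℕ} (hi : i < n) (hk : k < n) :
    n ∣ i * (n - 1) + k ↔ k = i := by
  have hn : 1 ≤ n := by omega
  rw [← ZMod.natCast_eq_zero_iff, Nat.cast_add, Nat.cast_mul, Nat.cast_sub hn, ZMod.natCast_self,
    Nat.cast_one, zero_sub, mul_neg_one, neg_add_eq_zero, ZMod.natCast_eq_natCast_iff',
    Nat.mod_eq_of_lt hi, Nat.mod_eq_of_lt hk, eq_comm]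

namespace Polynomial

variable {R : Type*} [CommRing R] {n : ℕ}

theorem monic_X_pow_sub_one (hn : 0 < n) : (X ^ n - 1 : R[X]).Monic := by
  simpa using monic_X_pow_sub_C (1 : R) hn.ne'

theorem degree_X_pow_sub_one [Nontrivial R] (hn : 0 < n) : (X ^ n - 1 : R[X]).degree = n := by
  simpa using degree_X_pow_sub_C hn (1 : R)

theorem natDegree_modByMonic_X_pow_sub_one_lt [Nontrivial R] (hn : 0 < n) (q : R[X]) :
    (q %ₘ (X ^ n - 1)).natDegree < n := by
  have hdeg : (X ^ n - 1 : R[X]).natDegree = n := by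
    simpa using natDegree_X_pow_sub_C (n := n) (r := (1 : R))
  refine (natDegree_modByMonic_lt q (monic_X_pow_sub_one hn) fun h => ?_).trans_eq hdeg
  rw [h, natDegree_one] at hdeg
  omega

theorem X_pow_modByMonic_X_pow_sub_one [Nontrivial R] (hn : 0 < n) (t : ℕ) :
    (X ^ t : R[X]) %ₘ (X ^ n - 1) = X ^ (t % n) := by
  have hm := monic_X_pow_sub_one (R := R) hn
  have hdvd : (X ^ n - 1 : R[X]) ∣ X ^ t - X ^ (t % n) := by
    have h := (pow_one_sub_dvd_pow_mul_sub_one (X : R[X]) n (t / n)).mul_left (X ^ (t % n))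
    rwa [mul_sub, mul_one, ← pow_add, Nat.mod_add_div] at h
  rw [modByMonic_eq_of_dvd_sub hm hdvd, (modByMonic_eq_self_iff hm).2]
  rw [degree_X_pow_sub_one hn, degree_X_pow]
  exact_mod_cast Nat.mod_lt t hn

theorem mul_modByMonic_modByMonic {m : R[X]} (hm : m.Monic) (a q : R[X]) :
    (a * (q %ₘ m)) %ₘ m = (a * q) %ₘ m :=
  modByMonic_eq_of_dvd_sub hm (by rw [← mul_sub]; exact (dvd_modByMonic_sub q m).mul_left a)

theorem coeff_zero_X_pow_mul_sub_one_mul_modByMonic [Nontrivial R] (hn : 0 < n) {i : ℕ}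
    (hi : i < n) (q : R[X]) :
    ((X ^ (i * (n - 1)) * q) %ₘ (X ^ n - 1)).coeff 0 = (q %ₘ (X ^ n - 1)).coeff i := by
  rw [← mul_modByMonic_modByMonic (monic_X_pow_sub_one hn)]
  set r := q %ₘ (X ^ n - 1)
  have hterm : ∀ k ∈ Finset.range n,
      ((X ^ (i * (n - 1)) * (C (r.coeff k) * X ^ k)) %ₘ (X ^ n - 1)).coeff 0 =
        if k = i then r.coeff k else 0 := by
    intro k hk
    rw [mul_left_comm, ← pow_add, ← smul_eq_C_mul, smul_modByMonic,
      X_pow_modByMonic_X_pow_sub_one hn, coeff_smul, coeff_X_pow]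
    simp only [eq_comm (a := 0), ← Nat.dvd_iff_mod_eq_zero,
      Nat.dvd_mul_sub_one_add_iff hi (Finset.mem_range.1 hk), smul_eq_mul, mul_ite, mul_one,
      mul_zero]
  conv_lhs => rw [as_sum_range_C_mul_X_pow' r (natDegree_modByMonic_X_pow_sub_one_lt hn q)]
  rw [Finset.mul_sum, ← modByMonicHom_apply, map_sum, finsetSum_coeff]
  simp only [modByMonicHom_apply]
  rw [Finset.sum_congr rfl hterm, Finset.sum_ite_eq', if_pos (Finset.mem_range.2 hi)]

theorem forall_coeff_zero_mul_modByMonic_eq_zero_iff [Nontrivial R] (hn : 0 < n) (h : R[X]) :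
    (∀ a : R[X], ((a * h) %ₘ (X ^ n - 1)).coeff 0 = 0) ↔ X ^ n - 1 ∣ h := by
  have hm := monic_X_pow_sub_one (R := R) hn
  refine ⟨fun H => ?_, fun ⟨t, ht⟩ a => ?_⟩
  · rw [← modByMonic_eq_zero_iff_dvd hm]
    ext j
    rw [coeff_zero]
    rcases lt_or_ge j n with hj | hj
    · rw [← coeff_zero_X_pow_mul_sub_one_mul_modByMonic hn hj]
      exact H _
    · exact coeff_eq_zero_of_natDegree_lt
        ((natDegree_modByMonic_X_pow_sub_one_lt hn h).trans_le hj)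
  · rw [ht, mul_left_comm, self_mul_modByMonic hm, coeff_zero]

end Polynomial

section SymplecticPairing

variable {p n : ℕ}

theorem vecToPoly_comp_X_pow_sub_one (w : Fin n → ZMod p) :
    (vecToPoly w).comp (X ^ (n - 1)) = ∑ i : Fin n, C (w i) * X ^ ((i : ℕ) * (n - 1)) := by
  rw [vecToPoly, sum_comp]
  refine Finset.sum_congr rfl fun i _ => ?_
  rw [mul_comp, C_comp, pow_comp, X_comp, ← pow_mul, Nat.mul_comm]

theorem sum_mul_coeff_modByMonic_eq_coeff_zero [Nontrivial (ZMod p)] (hn : 0 < n)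
    (w : Fin n → ZMod p) (q : (ZMod p)[X]) :
    ∑ i : Fin n, w i * (q %ₘ (X ^ n - 1)).coeff i =
      (((vecToPoly w).comp (X ^ (n - 1)) * q) %ₘ (X ^ n - 1)).coeff 0 := by
  conv_rhs => rw [vecToPoly_comp_X_pow_sub_one, Finset.sum_mul, ← modByMonicHom_apply, map_sum,
    finsetSum_coeff]
  refine Finset.sum_congr rfl fun i _ => ?_
  rw [mul_assoc, ← smul_eq_C_mul, map_smul, coeff_smul, modByMonicHom_apply,
    coeff_zero_X_pow_mul_sub_one_mul_modByMonic hn i.isLt, smul_eq_mul]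

theorem sympForm_polyToVec_modByMonic [Nontrivial (ZMod p)] (hn : 0 < n)
    (u v : Fin n → ZMod p) (a g f : (ZMod p)[X]) :
    sympForm (u, v)
        (polyToVec n ((a * g) %ₘ (X ^ n - 1)), polyToVec n ((a * f) %ₘ (X ^ n - 1))) =
      ((a * ((vecToPoly u).comp (X ^ (n - 1)) * f - (vecToPoly v).comp (X ^ (n - 1)) * g)) %ₘ
        (X ^ n - 1)).coeff 0 := by
  simp only [sympForm, polyToVec]
  rw [sum_mul_coeff_modByMonic_eq_coeff_zero hn, sum_mul_coeff_modByMonic_eq_coeff_zero hn,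
    ← coeff_sub, ← sub_modByMonic]
  congr 2
  ring

end SymplecticPairing

theorem stmt_8_general (p n : ℕ) (hp : p.Prime) (hn : 0 < n)
    (g f : Polynomial (ZMod p))
    (S : Set ((Fin n → ZMod p) × (Fin n → ZMod p)))
    (hS : S = {w | ∃ a : Polynomial (ZMod p),
      w = (polyToVec n ((a * g) %ₘ (X ^ n - 1)), polyToVec n ((a * f) %ₘ (X ^ n - 1)))})
    (u v : Fin n → ZMod p) :
    (∀ s ∈ S, sympForm ((u, v) : (Fin n → ZMod p) × (Fin n → ZMod p)) s = 0) ↔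
      ((X : Polynomial (ZMod p)) ^ n - 1) ∣
        (g * (vecToPoly v).comp (X ^ (n - 1)) - (vecToPoly u).comp (X ^ (n - 1)) * f) := by
  have : Fact (1 < p) := ⟨hp.one_lt⟩
  subst hS
  calc (∀ s ∈ _, sympForm (u, v) s = 0)
      ↔ ∀ a : (ZMod p)[X], ((a * ((vecToPoly u).comp (X ^ (n - 1)) * f -
          (vecToPoly v).comp (X ^ (n - 1)) * g)) %ₘ (X ^ n - 1)).coeff 0 = 0 := by
        simp [sympForm_polyToVec_modByMonic hn]
    _ ↔ _ := forall_coeff_zero_mul_modByMonic_eq_zero_iff hn _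
    _ ↔ _ := by rw [dvd_sub_comm, mul_comm g]

theorem stmt_8 (p n : ℕ) (hp : p.Prime) (hn : 0 < n) (hcop : Nat.Coprime n p)
    (g f : Polynomial (ZMod p))
    (S : Set ((Fin n → ZMod p) × (Fin n → ZMod p)))
    (hS : S = {w | ∃ a : Polynomial (ZMod p),
      w = (polyToVec n ((a * g) %ₘ (X ^ n - 1)), polyToVec n ((a * f) %ₘ (X ^ n - 1)))})
    (u v : Fin n → ZMod p) :
    (∀ s ∈ S, sympForm ((u, v) : (Fin n → ZMod p) × (Fin n → ZMod p)) s = 0) ↔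
      ((X : Polynomial (ZMod p)) ^ n - 1) ∣
        (g * (vecToPoly v).comp (X ^ (n - 1)) - (vecToPoly u).comp (X ^ (n - 1)) * f) :=
  stmt_8_general p n hp hn g f S hS u v
end

section
/- Let p be a prime, n coprime to p, and let S be a totally isotropic simultaneously cyclic subspace of F_p^n × F_p^n whose image in F_{p^2}^n under (a,b) ↦ a + η b (for η generating F_{p^2} over F_p) is an ideal of F_{p^2}[X]/(X^n - 1). If n divides p^t + 1 for some positive integer t, then S is uniquely cyclic: for every (0, h) in S, h = 0. -/
open Polynomial

/-- The identification of `F_p^n × F_p^n` with `F_{p²}[X]/(Xⁿ-1)` via `(a,b) ↦ a + ηb`. -/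
noncomputable def pairToQuot (p n : ℕ) [Fact p.Prime] (η : GaloisField p 2)
    (w : (Fin n → ZMod p) × (Fin n → ZMod p)) :
    Polynomial (GaloisField p 2) ⧸
      Ideal.span {(X : Polynomial (GaloisField p 2)) ^ n - 1} :=
  Ideal.Quotient.mk _
    ((vecToPoly w.1).map (algebraMap (ZMod p) (GaloisField p 2)) +
      Polynomial.C η * (vecToPoly w.2).map (algebraMap (ZMod p) (GaloisField p 2)))


/-!
Writing `η² = c + dη` (with `c ≠ 0`, as `η ∉ 𝔽_p`), multiplication by `η` in the ideal puts
`(c • h, d • h)` in `S`, so isotropy of `(0, h)` against all cyclic shifts of it says that the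
cyclic autocorrelation `∑ᵢ hᵢ h_{i-k}` of `h` vanishes for every `k`. For `g = ∑ hᵢ Xⁱ` this means
`g(X) g(X⁻¹) ≡ 0 mod Xⁿ - 1`. Since `n ∣ p^t + 1`, `X⁻¹ ≡ X^{p^t}`, and Frobenius turns `g(X^{p^t})`
into `g^{p^t}`; hence `Xⁿ - 1 ∣ g^{p^t + 1}`. As `p ∤ n`, `Xⁿ - 1` is separable, hence squarefree,
so it divides `g` itself, which has degree `< n`: thus `g = 0`.
-/

theorem FiniteField.expand_card_pow {K : Type*} [Field K] [Fintype K] (f : K[X]) (t : ℕ) :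
    expand K (Fintype.card K ^ t) f = f ^ Fintype.card K ^ t := by
  induction t with
  | zero => simp
  | succ t ih => rw [pow_succ, expand_mul, FiniteField.expand_card, map_pow, ih, ← pow_mul]

theorem coeff_sum_fin_C_mul_X_pow {R : Type*} [Semiring R] {n : ℕ} (a : Fin n → R) (j : Fin n) :
    (∑ i : Fin n, C (a i) * X ^ (i : ℕ)).coeff j = a j := by
  rw [finsetSum_coeff, Finset.sum_eq_single j]
  · simp
  · intro i _ hij
    rw [coeff_C_mul_X_pow, if_neg (Fin.val_ne_of_ne hij.symm)]
  · simp

section CyclicSums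

variable {n : ℕ} [NeZero n]

theorem pow_val_sub_mul_pow_val {M : Type*} [Monoid M] {x : M} (hx : x ^ n = 1) (i j : Fin n) :
    x ^ ((i - j : Fin n) : ℕ) * x ^ (j : ℕ) = x ^ (i : ℕ) := by
  rw [← pow_add, pow_eq_pow_mod _ hx, ← Fin.val_add, sub_add_cancel]

theorem sum_mul_sum_pow_of_mul_eq_one {R : Type*} [CommSemiring R] {x y : R} (hx : x ^ n = 1)
    (hxy : x * y = 1) (a : Fin n → R) :
    (∑ i, a i * x ^ (i : ℕ)) * (∑ j, a j * y ^ (j : ℕ)) =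
      ∑ k, (∑ i, a i * a (i - k)) * x ^ (k : ℕ) := by
  have hpow (i j : Fin n) : x ^ (i : ℕ) * y ^ (j : ℕ) = x ^ ((i - j : Fin n) : ℕ) := by
    rw [← pow_val_sub_mul_pow_val hx i j, mul_assoc, ← mul_pow, hxy, one_pow, mul_one]
  calc (∑ i, a i * x ^ (i : ℕ)) * (∑ j, a j * y ^ (j : ℕ))
      = ∑ i, ∑ j, a i * a j * x ^ ((i - j : Fin n) : ℕ) := by
        simp_rw [Finset.sum_mul_sum, ← hpow]
        exact Finset.sum_congr rfl fun _ _ => Finset.sum_congr rfl fun _ _ => by ring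
    _ = ∑ i, ∑ k, a i * a (i - k) * x ^ (k : ℕ) := by
        refine Finset.sum_congr rfl fun i _ => Fintype.sum_equiv (Equiv.subLeft i) _ _ fun j => ?_
        simp
    _ = ∑ k, (∑ i, a i * a (i - k)) * x ^ (k : ℕ) := by
        rw [Finset.sum_comm]
        simp_rw [Finset.sum_mul]

theorem mk_sum_fin_C_mul_X_pow_injective {K : Type*} [Field K] :
    Function.Injective fun a : Fin n → K =>
      Ideal.Quotient.mk (Ideal.span {(X : K[X]) ^ n - 1}) (∑ i : Fin n, C (a i) * X ^ (i : ℕ)) := by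
  intro a b hab
  rw [Ideal.Quotient.eq, Ideal.mem_span_singleton, ← Finset.sum_sub_distrib] at hab
  simp_rw [← sub_mul, ← C_sub] at hab
  have hzero := eq_zero_of_dvd_of_degree_lt hab <| by
    rw [← C_1, degree_X_pow_sub_C (Nat.pos_of_neZero n)]
    exact degree_sum_fin_lt _
  funext j
  simpa only [coeff_sum_fin_C_mul_X_pow, coeff_zero, sub_eq_zero] using congrArg (coeff · j) hzero

end CyclicSums

theorem eq_zero_of_autocorrelation_eq_zero {K : Type*} [Field K] [Fintype K] {n t : ℕ}
    [NeZero n] (ht : 0 < t) (hdvd : n ∣ Fintype.card K ^ t + 1) (a : Fin n → K)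
    (hcorr : ∀ k : Fin n, ∑ i, a i * a (i - k) = 0) : a = 0 := by
  set g : K[X] := ∑ i : Fin n, C (a i) * X ^ (i : ℕ)
  have hn : (n : K) ≠ 0 := by
    intro hn
    obtain ⟨m, hm⟩ := hdvd
    have := congrArg (Nat.cast : ℕ → K) hm
    simp [hn, ht.ne'] at this
  have hdiv : X ^ n - 1 ∣ g ^ (Fintype.card K ^ t + 1) := by
    set x := AdjoinRoot.root ((X : K[X]) ^ n - 1)
    have hx : x ^ n = 1 := by
      have := AdjoinRoot.eval₂_root ((X : K[X]) ^ n - 1)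
      rwa [eval₂_sub, eval₂_X_pow, eval₂_one, sub_eq_zero] at this
    have hxy : x * x ^ Fintype.card K ^ t = 1 := by
      obtain ⟨m, hm⟩ := hdvd
      rw [← pow_succ', hm, pow_mul, hx, one_pow]
    rw [← AdjoinRoot.mk_eq_zero, ← AdjoinRoot.aeval_eq, pow_succ', map_mul,
      ← FiniteField.expand_card_pow, expand_aeval]
    simp only [g, map_sum, map_mul, aeval_C, aeval_X_pow]
    rw [sum_mul_sum_pow_of_mul_eq_one hx hxy]
    simp [← map_mul, ← map_sum, hcorr]
  have hg : g = 0 := by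
    have hrad := (separable_X_pow_sub_C (1 : K) hn one_ne_zero).squarefree.isRadical
    rw [C_1] at hrad
    refine eq_zero_of_dvd_of_degree_lt (hrad _ _ hdiv) ?_
    rw [← C_1, degree_X_pow_sub_C (Nat.pos_of_neZero n)]
    exact degree_sum_fin_lt _
  funext j
  simpa only [g, coeff_sum_fin_C_mul_X_pow, coeff_zero, Pi.zero_apply] using congrArg (coeff · j) hg

section QuadraticExtension

variable {F L : Type*} [Field F] [Field L] [Algebra F L]

theorem linearIndependent_one_of_adjoin_eq_top (hL : Module.finrank F L ≠ 1) {η : L}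
    (hη : Algebra.adjoin F {η} = ⊤) : LinearIndependent F ![1, η] := by
  rw [LinearIndependent.pair_iff' one_ne_zero]
  rintro a rfl
  apply hL
  rw [← Subalgebra.bot_eq_top_iff_finrank_eq_one, ← hη]
  exact le_antisymm bot_le <| Algebra.adjoin_le <|
    Set.singleton_subset_iff.mpr (Subalgebra.smul_mem _ (one_mem _) a)

theorem exists_sq_eq_of_linearIndependent (hL : Module.finrank F L = 2) {η : L}
    (hli : LinearIndependent F ![1, η]) :
    ∃ c d : F, c ≠ 0 ∧ η ^ 2 = algebraMap F L c + algebraMap F L d * η := by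
  have := Module.finite_of_finrank_eq_succ hL
  have hη0 : η ≠ 0 := by simpa using hli.ne_zero 1
  have hspan : Submodule.span F {η, 1} = ⊤ := by
    simpa using hli.span_eq_top_of_card_eq_finrank' (by simp [hL])
  obtain ⟨d, c, hcd⟩ := Submodule.mem_span_pair.mp (hspan ▸ Submodule.mem_top : η ^ 2 ∈ _)
  refine ⟨c, d, ?_, ?_⟩
  · rintro rfl
    refine (LinearIndependent.pair_iff' one_ne_zero).mp hli d (mul_right_cancel₀ hη0 ?_)
    rw [smul_one_mul, ← sq, ← hcd, zero_smul, add_zero]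
  · rw [← hcd, Algebra.smul_def, Algebra.smul_def, mul_one, add_comm]

end QuadraticExtension

def pairToVec {ι F L : Type*} [CommSemiring F] [Semiring L] [Algebra F L] (η : L)
    (w : (ι → F) × (ι → F)) : ι → L :=
  fun i => algebraMap F L (w.1 i) + η * algebraMap F L (w.2 i)

theorem pairToVec_injective {ι F L : Type*} [CommRing F] [CommRing L] [Algebra F L] {η : L}
    (hli : LinearIndependent F ![1, η]) : Function.Injective (pairToVec (ι := ι) (F := F) η) := by
  intro w w' hw
  have hcoord (i : ι) : w.1 i = w'.1 i ∧ w.2 i = w'.2 i := by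
    have hi := congrFun hw i
    simp only [pairToVec] at hi
    have := LinearIndependent.pair_iff.mp hli (w.1 i - w'.1 i) (w.2 i - w'.2 i) <| by
      rw [Algebra.smul_def, Algebra.smul_def, mul_one, mul_comm, map_sub, map_sub]
      linear_combination hi
    exact ⟨sub_eq_zero.mp this.1, sub_eq_zero.mp this.2⟩
  exact Prod.ext (funext fun i => (hcoord i).1) (funext fun i => (hcoord i).2)

section PairToQuot

variable {p n : ℕ} [Fact p.Prime] {η : GaloisField p 2}

theorem pairToQuot_eq (w : (Fin n → ZMod p) × (Fin n → ZMod p)) :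
    pairToQuot p n η w = Ideal.Quotient.mk _ (∑ i, C (pairToVec η w i) * X ^ (i : ℕ)) := by
  simp [pairToQuot, pairToVec, vecToPoly, Polynomial.map_sum, Finset.mul_sum,
    ← Finset.sum_add_distrib, add_mul, mul_assoc]

theorem pairToQuot_injective [NeZero n] (hli : LinearIndependent (ZMod p) ![1, η]) :
    Function.Injective (pairToQuot p n η) := by
  intro w w' hw
  rw [pairToQuot_eq, pairToQuot_eq] at hw
  exact pairToVec_injective hli (mk_sum_fin_C_mul_X_pow_injective hw)

theorem mk_C_mul_pairToQuot_zero_fst {c d : ZMod p}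
    (hcd : η ^ 2 = algebraMap (ZMod p) _ c + algebraMap (ZMod p) _ d * η) (h : Fin n → ZMod p) :
    Ideal.Quotient.mk _ (C η) * pairToQuot p n η (0, h) = pairToQuot p n η (c • h, d • h) := by
  rw [pairToQuot_eq, pairToQuot_eq, ← map_mul, Finset.mul_sum]
  refine congrArg _ (Finset.sum_congr rfl fun i _ => ?_)
  rw [← mul_assoc, ← C_mul]
  congr 2
  simp only [pairToVec, Pi.zero_apply, Pi.smul_apply, smul_eq_mul, map_zero, map_mul, zero_add]
  linear_combination algebraMap (ZMod p) _ (h i) * hcd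

end PairToQuot

section Isotropy

variable {p n : ℕ} [NeZero n]

open Fin.NatCast in
theorem rightShift_iterate_apply (k : ℕ) (u : Fin n → ZMod p) (i : Fin n) :
    rightShift^[k] u i = u (i - k) := by
  induction k generalizing u with
  | zero => simp
  | succ k ih =>
    rw [Function.iterate_succ_apply, ih, rightShift]
    congr 1
    push_cast
    abel

variable {S : Submodule (ZMod p) ((Fin n → ZMod p) × (Fin n → ZMod p))}

theorem rightShift_iterate_mem (hcyc : ∀ w ∈ S, (rightShift w.1, rightShift w.2) ∈ S)
    {w : (Fin n → ZMod p) × (Fin n → ZMod p)} (hw : w ∈ S) (k : ℕ) :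
    (rightShift^[k] w.1, rightShift^[k] w.2) ∈ S := by
  induction k with
  | zero => exact hw
  | succ k ih => simpa only [Function.iterate_succ_apply'] using hcyc _ ih

theorem autocorrelation_eq_zero_of_isotropic [Fact p.Prime]
    (hcyc : ∀ w ∈ S, (rightShift w.1, rightShift w.2) ∈ S)
    (hiso : ∀ u ∈ S, ∀ v ∈ S, sympForm u v = 0) {c d : ZMod p} (hc : c ≠ 0)
    {h : Fin n → ZMod p} (h0 : ((0 : Fin n → ZMod p), h) ∈ S) (hcd : (c • h, d • h) ∈ S)
    (k : Fin n) : ∑ i, h i * h (i - k) = 0 := by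
  have hk := hiso _ h0 _ (rightShift_iterate_mem hcyc hcd k)
  simp only [sympForm, rightShift_iterate_apply, Fin.cast_val_eq_self, Pi.zero_apply,
    Pi.smul_apply, smul_eq_mul, zero_mul, Finset.sum_const_zero, zero_sub, neg_eq_zero] at hk
  refine (mul_eq_zero.mp ?_).resolve_left hc
  rw [Finset.mul_sum, ← hk]
  exact Finset.sum_congr rfl fun i _ => by ring

end Isotropy

theorem stmt_9_general (p t n : ℕ) [Fact p.Prime] [NeZero n] (ht : 0 < t)
    (hdvd : n ∣ p ^ t + 1)
    (η : GaloisField p 2) (hη : Algebra.adjoin (ZMod p) {η} = ⊤)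
    (S : Submodule (ZMod p) ((Fin n → ZMod p) × (Fin n → ZMod p)))
    (hcyc : ∀ w ∈ S, (rightShift w.1, rightShift w.2) ∈ S)
    (hiso : ∀ u ∈ S, ∀ v ∈ S, sympForm u v = 0)
    (hideal : ∃ I : Ideal (Polynomial (GaloisField p 2) ⧸
        Ideal.span {(X : Polynomial (GaloisField p 2)) ^ n - 1}),
      pairToQuot p n η '' (S : Set ((Fin n → ZMod p) × (Fin n → ZMod p))) = (I : Set _)) :
    ∀ h : Fin n → ZMod p, ((0 : Fin n → ZMod p), h) ∈ S → h = 0 := by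
  intro h hS
  have hrank : Module.finrank (ZMod p) (GaloisField p 2) = 2 := GaloisField.finrank p two_ne_zero
  have hli := linearIndependent_one_of_adjoin_eq_top (by omega) hη
  obtain ⟨c, d, hc, hcd⟩ := exists_sq_eq_of_linearIndependent hrank hli
  obtain ⟨I, hI⟩ := hideal
  have hcdS : (c • h, d • h) ∈ S := by
    have hmem : pairToQuot p n η (c • h, d • h) ∈ (I : Set _) := by
      rw [← mk_C_mul_pairToQuot_zero_fst hcd]
      have h0I : pairToQuot p n η (0, h) ∈ (I : Set _) := hI ▸ Set.mem_image_of_mem _ hS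
      exact I.mul_mem_left _ h0I
    rwa [← hI, (pairToQuot_injective hli).mem_set_image] at hmem
  exact eq_zero_of_autocorrelation_eq_zero ht (by rwa [ZMod.card]) h
    (autocorrelation_eq_zero_of_isotropic hcyc hiso hc hS hcdS)

theorem stmt_9 (p t n : ℕ) (hp : p.Prime) [Fact p.Prime] [NeZero n] (ht : 0 < t)
    (hdvd : n ∣ p ^ t + 1)
    (η : GaloisField p 2) (hη : Algebra.adjoin (ZMod p) {η} = ⊤)
    (S : Submodule (ZMod p) ((Fin n → ZMod p) × (Fin n → ZMod p)))
    (hcyc : ∀ w ∈ S, (rightShift w.1, rightShift w.2) ∈ S)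
    (hiso : ∀ u ∈ S, ∀ v ∈ S, sympForm u v = 0)
    (hideal : ∃ I : Ideal (Polynomial (GaloisField p 2) ⧸
        Ideal.span {(X : Polynomial (GaloisField p 2)) ^ n - 1}),
      pairToQuot p n η '' (S : Set ((Fin n → ZMod p) × (Fin n → ZMod p))) = (I : Set _)) :
    ∀ h : Fin n → ZMod p, ((0 : Fin n → ZMod p), h) ∈ S → h = 0 :=
  stmt_9_general p t n ht hdvd η hη S hcyc hiso hideal
end

section
/- Let p be a prime, n divide p^{dm}+1 for positive integers d, m, and let F_p(η) be the degree-d extension of F_p. Suppose X^n - 1 = g(X) · ∏_{i=0}^{d-1} σ^i(h) over F_p(η), where g ∈ F_p[X] and h ∈ F_p(η)[X], and all factors g, σ^i(h) are pairwise coprime. Fix nonzero α ∈ F_p and let a ∈ F_p(η)[X]/(X^n-1) be defined by Chinese remaindering: a ≡ 1 (mod g) and a ≡ σ^i(αη) (mod σ^i(h)) for 0 ≤ i < d. Then σ(a) = a, i.e., a has all coefficients in F_p. -/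
/-! The Frobenius `σ` fixes `g`, whose coefficients lie in `𝔽_p`, and permutes the conjugates
`σ^i(h)` cyclically because `σ^d = 1`. Applying `σ` to `a ≡ σ^i(αη) mod σ^i(h)` gives
`σ(a) ≡ σ^(i+1)(αη) mod σ^(i+1)(h)`, which is also the residue of `a` there; likewise
`σ(a) ≡ 1 ≡ a mod g`. So every factor of `X^n - 1` divides `σ(a) - a`, and by pairwise coprimality
so does their product. -/

open Polynomial

namespace Polynomial

variable {K : Type*} [CommRing K] (σ : K →+* K)

theorem iterate_map_eq_map_pow (i : ℕ) (q : K[X]) :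
    (fun q : K[X] => q.map σ)^[i] q = q.map (σ ^ i) := by
  induction i with
  | zero => exact (map_id).symm
  | succ i ih => rw [Function.iterate_succ_apply', ih, map_map, pow_succ', RingHom.mul_def]

variable {σ}

theorem dvd_map_sub_self {q a : K[X]} {b : K} (hb : q ∣ a - C b) (hσb : q.map σ ∣ a - C (σ b)) :
    q.map σ ∣ a.map σ - a := by
  have hmap : q.map σ ∣ a.map σ - C (σ b) := by simpa using map_dvd σ hb
  simpa using dvd_sub hmap hσb

theorem dvd_map_sub_self_of_map_eq {q a : K[X]} (hq : q.map σ = q) (ha : q ∣ a - 1) :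
    q ∣ a.map σ - a := by
  rw [← C_1] at ha
  exact hq ▸ dvd_map_sub_self ha (by rwa [map_one, hq])

theorem map_pow_dvd_map_sub_self {d : ℕ} (hd : 0 < d) (hσ : σ ^ d = 1) {h a : K[X]} {β : K}
    (ha : ∀ i < d, h.map (σ ^ i) ∣ a - C ((σ ^ i) β)) {i : ℕ} (hi : i < d) :
    h.map (σ ^ i) ∣ a.map σ - a := by
  obtain ⟨j, hj, hij⟩ : ∃ j < d, σ ^ i = σ * σ ^ j := by
    rcases i with _ | j
    · exact ⟨d - 1, by omega, by rw [← pow_succ', Nat.sub_add_cancel hd, hσ, pow_zero]⟩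
    · exact ⟨j, by omega, pow_succ' σ j⟩
  have hσi := ha i hi
  rw [hij, RingHom.mul_def, ← map_map, RingHom.comp_apply] at hσi
  rw [hij, RingHom.mul_def, ← map_map]
  exact dvd_map_sub_self (ha j hj) hσi

end Polynomial

theorem stmt_16_general (p d n : ℕ) [Fact p.Prime]
    (hd : 0 < d)
    (η : GaloisField p d)
    (g : Polynomial (ZMod p)) (h : Polynomial (GaloisField p d))
    (hfact : (X : Polynomial (GaloisField p d)) ^ n - 1 =
      g.map (algebraMap (ZMod p) (GaloisField p d)) *
        ∏ i ∈ Finset.range d,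
          (fun q : Polynomial (GaloisField p d) =>
            q.map (frobenius (GaloisField p d) p))^[i] h)
    (hcopg : ∀ i < d, IsCoprime (g.map (algebraMap (ZMod p) (GaloisField p d)))
      ((fun q : Polynomial (GaloisField p d) =>
        q.map (frobenius (GaloisField p d) p))^[i] h))
    (hcoph : ∀ i < d, ∀ j < d, i ≠ j →
      IsCoprime ((fun q : Polynomial (GaloisField p d) =>
          q.map (frobenius (GaloisField p d) p))^[i] h)
        ((fun q : Polynomial (GaloisField p d) =>
          q.map (frobenius (GaloisField p d) p))^[j] h))
    (α : ZMod p)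
    (a : Polynomial (GaloisField p d))
    (ha1 : g.map (algebraMap (ZMod p) (GaloisField p d)) ∣ (a - 1))
    (ha2 : ∀ i < d,
      (fun q : Polynomial (GaloisField p d) =>
        q.map (frobenius (GaloisField p d) p))^[i] h ∣
          (a - Polynomial.C ((algebraMap (ZMod p) (GaloisField p d) α * η) ^ p ^ i))) :
    (X : Polynomial (GaloisField p d)) ^ n - 1 ∣
      (a.map (frobenius (GaloisField p d) p) - a) := by
  set σ := frobenius (GaloisField p d) p
  set ι := algebraMap (ZMod p) (GaloisField p d)
  have hσd : σ ^ d = 1 := by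
    have := Fintype.ofFinite (GaloisField p d)
    exact FiniteField.frobenius_pow <| by
      rw [← Nat.card_eq_fintype_card, GaloisField.card p d hd.ne']
  have hσg : (g.map ι).map σ = g.map ι := by
    rw [map_map, Subsingleton.elim (σ.comp ι) ι]
  simp only [iterate_map_eq_map_pow] at hfact hcopg hcoph ha2
  have hconj : ∀ i < d, h.map (σ ^ i) ∣ a - C ((σ ^ i) (ι α * η)) := by
    simpa only [σ, RingHom.coe_pow, iterate_frobenius] using ha2
  rw [hfact]
  refine IsCoprime.mul_dvd (IsCoprime.prod_right fun i hi => hcopg i (Finset.mem_range.mp hi))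
    (dvd_map_sub_self_of_map_eq hσg ha1) ?_
  refine Finset.prod_dvd_of_coprime (fun i hi j hj hij => ?_) fun i hi => ?_
  · exact hcoph i (Finset.mem_range.mp hi) j (Finset.mem_range.mp hj) hij
  · exact map_pow_dvd_map_sub_self hd hσd hconj (Finset.mem_range.mp hi)

theorem stmt_16 (p d m n : ℕ) (hp : p.Prime) [Fact p.Prime]
    (hd : 0 < d) (hm : 0 < m) (hn : 0 < n) (hdvd : n ∣ p ^ (d * m) + 1)
    (η : GaloisField p d) (hη : Algebra.adjoin (ZMod p) {η} = ⊤)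
    (g : Polynomial (ZMod p)) (h : Polynomial (GaloisField p d))
    (hfact : (X : Polynomial (GaloisField p d)) ^ n - 1 =
      g.map (algebraMap (ZMod p) (GaloisField p d)) *
        ∏ i ∈ Finset.range d,
          (fun q : Polynomial (GaloisField p d) =>
            q.map (frobenius (GaloisField p d) p))^[i] h)
    (hcopg : ∀ i < d, IsCoprime (g.map (algebraMap (ZMod p) (GaloisField p d)))
      ((fun q : Polynomial (GaloisField p d) =>
        q.map (frobenius (GaloisField p d) p))^[i] h))
    (hcoph : ∀ i < d, ∀ j < d, i ≠ j →
      IsCoprime ((fun q : Polynomial (GaloisField p d) =>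
          q.map (frobenius (GaloisField p d) p))^[i] h)
        ((fun q : Polynomial (GaloisField p d) =>
          q.map (frobenius (GaloisField p d) p))^[j] h))
    (α : ZMod p) (hα : α ≠ 0)
    (a : Polynomial (GaloisField p d))
    (ha1 : g.map (algebraMap (ZMod p) (GaloisField p d)) ∣ (a - 1))
    (ha2 : ∀ i < d,
      (fun q : Polynomial (GaloisField p d) =>
        q.map (frobenius (GaloisField p d) p))^[i] h ∣
          (a - Polynomial.C ((algebraMap (ZMod p) (GaloisField p d) α * η) ^ p ^ i))) :
    (X : Polynomial (GaloisField p d)) ^ n - 1 ∣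
      (a.map (frobenius (GaloisField p d) p) - a) :=
  stmt_16_general p d n hd η g h hfact hcopg hcoph α a ha1 ha2
end

section
/- Let h be a monic divisor of X^n - 1 over a finite field F_q with gcd(n, q) = 1, and suppose h has BCH designed distance δ: there is a primitive n-th root of unity β and an integer ℓ such that β^ℓ, β^{ℓ+1}, ..., β^{ℓ+δ-2} are all roots of h. Then every nonzero polynomial multiple of h of degree less than n has at least δ nonzero coefficients. -/
open Polynomial Matrix

theorem stmt_19 (F : Type*) [Field F] [Fintype F] (n : ℕ) (hn : 0 < n)
    (hnF : (n : F) ≠ 0)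
    (E : Type*) [Field E] [Algebra F E] (β : E) (hβ : IsPrimitiveRoot β n)
    (h : Polynomial F) (hmonic : h.Monic) (hdvd : h ∣ X ^ n - 1)
    (δ ℓ : ℕ) (hδ : 1 ≤ δ)
    (hroots : ∀ j < δ - 1, Polynomial.aeval (β ^ (ℓ + j)) h = 0)
    (c : Polynomial F) (hc : c ≠ 0) (hch : h ∣ c) (hcdeg : c.natDegree < n) :
    δ ≤ c.support.card := by
  by_contra hlt
  push_neg at hlt
  set w := c.support.card with hw
  have hw1 : 0 < w := Finset.card_pos.mpr (Polynomial.support_nonempty.mpr hc)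
  obtain ⟨g, hg⟩ := hch
  have hcroots : ∀ j < δ - 1, aeval (β ^ (ℓ + j)) c = 0 := by
    intro j hj
    rw [hg, _root_.map_mul, hroots j hj, zero_mul]
  -- enumerate the support
  set e : Fin w ≃ {i // i ∈ c.support} := c.support.equivFin.symm with he
  set ι : Fin w → ℕ := fun k => (e k : ℕ) with hι
  have hιmem : ∀ k, ι k ∈ c.support := fun k => (e k).2
  have hιlt : ∀ k, ι k < n := fun k =>
    lt_of_le_of_lt (Polynomial.le_natDegree_of_mem_supp _ (hιmem k)) hcdeg
  have hιinj : Function.Injective ι := fun a b hab => by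
    apply e.injective; exact Subtype.ext hab
  set x : Fin w → E := fun k => β ^ ι k with hx
  have hxinj : Function.Injective x := fun a b hab =>
    hιinj (hβ.pow_inj (hιlt a) (hιlt b) hab)
  set v : Fin w → E := fun k => algebraMap F E (c.coeff (ι k)) * β ^ (ι k * ℓ) with hv
  have key : ∀ j : Fin w, ∑ k : Fin w, x k ^ (j : ℕ) * v k = 0 := by
    intro j
    have hj : (j : ℕ) < δ - 1 := lt_of_lt_of_le j.isLt (by omega)
    have h0 := hcroots j hj
    rw [aeval_def, eval₂_eq_sum, Polynomial.sum_def] at h0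
    rw [← Finset.sum_coe_sort c.support
      (fun i => algebraMap F E (c.coeff i) * (β ^ (ℓ + (j : ℕ))) ^ (i : ℕ))] at h0
    rw [← Equiv.sum_comp e
      (fun i : {i // i ∈ c.support} =>
        algebraMap F E (c.coeff i) * (β ^ (ℓ + (j : ℕ))) ^ (i : ℕ))] at h0
    rw [← h0]
    apply Finset.sum_congr rfl
    intro k _
    show x k ^ (j : ℕ) * v k = algebraMap F E (c.coeff (ι k)) * (β ^ (ℓ + (j : ℕ))) ^ ι k
    have : (β ^ (ℓ + (j : ℕ))) ^ ι k = (β ^ ι k) ^ (j : ℕ) * β ^ (ι k * ℓ) := by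
      rw [← pow_mul, ← pow_mul, ← pow_add]
      ring_nf
    rw [this, hx, hv]
    ring
  -- Vandermonde
  have hdet : ((Matrix.vandermonde x)ᵀ).det ≠ 0 := by
    rw [Matrix.det_transpose]
    exact Matrix.det_vandermonde_ne_zero_iff.mpr hxinj
  have hmv : (Matrix.vandermonde x)ᵀ.mulVec v = 0 := by
    funext j
    simpa [Matrix.mulVec, dotProduct, Matrix.vandermonde] using key j
  have hv0 := Matrix.eq_zero_of_mulVec_eq_zero hdet hmv
  have hk0 := congrFun hv0 ⟨0, hw1⟩
  rw [hv] at hk0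
  simp only [Pi.zero_apply, mul_eq_zero] at hk0
  have hβne : β ≠ 0 := hβ.ne_zero hn.ne'
  rcases hk0 with hk0 | hk0
  · exact Polynomial.mem_support_iff.mp (hιmem ⟨0, hw1⟩)
      (((_root_.map_eq_zero _)).mp hk0)
  · exact pow_ne_zero _ hβne hk0
end
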